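/- arXiv:1007.2096 — 4 statements merged into one kernel-verified Lean document; each statement's English description precedes it below -/
import Mathlib

section
/- Let ε be an n-dimensional Gaussian vector with i.i.d. centered components of variance σ² > 0. Then E[(‖ε‖² − 2nσ²)₊] ≤ 3σ² for all n ≥ 1, where x₊ denotes the positive part of x. -/
/-
Write `S = ‖ε‖²`, with mean `a = nσ²`. On `{S ≥ 2a}` we have `S - 2a ≤ (S - a)² / (4a)`, because
the difference of the two sides is `(S - 3a)² / (4a)`; taking expectations,
`E[(S - 2a)₊] ≤ Var S / (4a)`. The coordinates are independent, so `Var S = n Var(ε₁²) = 2nσ⁴`,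
where `E[ε₁⁴] = 3σ⁴` is read off the fourth derivative at `0` of the moment generating function
`t ↦ exp (σ² t² / 2)`. Hence `E[(S - 2a)₊] ≤ σ² / 2 ≤ 3σ²`.
-/

open MeasureTheory ProbabilityTheory Real
open scoped NNReal

lemma max_sub_two_mul_le_sq_sub_div {a : ℝ} (ha : 0 < a) (x : ℝ) :
    max (x - 2 * a) 0 ≤ (x - a) ^ 2 / (4 * a) := by
  rw [le_div_iff₀ (by positivity)]
  rcases le_total (x - 2 * a) 0 with h | h
  · rw [max_eq_right h, zero_mul]; positivity
  · rw [max_eq_left h]; nlinarith [sq_nonneg (x - 3 * a)]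

lemma integral_max_sub_two_mul_integral_le {Ω : Type*} [MeasurableSpace Ω] {μ : Measure Ω}
    [IsProbabilityMeasure μ] {X : Ω → ℝ} (hX : MemLp X 2 μ) (hpos : 0 < μ[X]) :
    ∫ ω, max (X ω - 2 * μ[X]) 0 ∂μ ≤ Var[X; μ] / (4 * μ[X]) :=
  calc ∫ ω, max (X ω - 2 * μ[X]) 0 ∂μ ≤ ∫ ω, (X ω - μ[X]) ^ 2 / (4 * μ[X]) ∂μ :=
        integral_mono_of_nonneg (ae_of_all _ fun _ => le_max_right _ _)
          ((hX.sub (memLp_const _)).integrable_sq.div_const _)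
          (ae_of_all _ fun ω => max_sub_two_mul_le_sq_sub_div hpos (X ω))
    _ = Var[X; μ] / (4 * μ[X]) := by rw [integral_div, variance_eq_integral hX.aemeasurable]

lemma deriv_mul_exp_mul_sq_div_two (v : ℝ) {p : ℝ → ℝ} (hp : Differentiable ℝ p) :
    deriv (fun t => p t * rexp (v * t ^ 2 / 2)) =
      fun t => (deriv p t + v * t * p t) * rexp (v * t ^ 2 / 2) := by
  ext t
  have := (hp t).hasDerivAt.fun_mul ((hasDerivAt_pow 2 t).const_mul v |>.div_const 2).exp
  rw [this.deriv]
  push_cast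
  ring

lemma iteratedDeriv_four_exp_mul_sq_div_two_zero (v : ℝ) :
    iteratedDeriv 4 (fun t => rexp (v * t ^ 2 / 2)) 0 = 3 * v ^ 2 := by
  have h1 : deriv (fun t => rexp (v * t ^ 2 / 2)) = fun t => v * t * rexp (v * t ^ 2 / 2) := by
    simpa using deriv_mul_exp_mul_sq_div_two v (p := fun _ => 1) (by fun_prop)
  have h2 : deriv (fun t => v * t * rexp (v * t ^ 2 / 2)) =
      fun t => (v + v ^ 2 * t ^ 2) * rexp (v * t ^ 2 / 2) := by
    rw [deriv_mul_exp_mul_sq_div_two v (by fun_prop)]; ext t; simp; ring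
  have h3 : deriv (fun t => (v + v ^ 2 * t ^ 2) * rexp (v * t ^ 2 / 2)) =
      fun t => (3 * v ^ 2 * t + v ^ 3 * t ^ 3) * rexp (v * t ^ 2 / 2) := by
    rw [deriv_mul_exp_mul_sq_div_two v (by fun_prop)]; ext t; simp; ring
  rw [iteratedDeriv_succ', h1, iteratedDeriv_succ', h2, iteratedDeriv_succ', h3, iteratedDeriv_one,
    deriv_mul_exp_mul_sq_div_two v (by fun_prop)]
  simp only [mul_zero, zero_add]
  rw [deriv_fun_add (by fun_prop) (by fun_prop)]
  simp

lemma integral_sq_gaussianReal (v : ℝ≥0) : ∫ x, x ^ 2 ∂gaussianReal 0 v = v := by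
  rw [← variance_of_integral_eq_zero aemeasurable_id' integral_id_gaussianReal,
    variance_fun_id_gaussianReal]

lemma integral_pow_four_gaussianReal (v : ℝ≥0) :
    ∫ x, x ^ 4 ∂gaussianReal 0 v = 3 * v ^ 2 := by
  have := iteratedDeriv_mgf_zero (X := fun x => x) (μ := gaussianReal 0 v) (by simp) 4
  rw [mgf_fun_id_gaussianReal] at this
  simpa [iteratedDeriv_four_exp_mul_sq_div_two_zero] using this.symm

lemma memLp_sq_gaussianReal (v : ℝ≥0) : MemLp (fun x => x ^ 2) 2 (gaussianReal 0 v) :=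
  (memLp_two_iff_integrable_sq (by fun_prop)).2 <| by
    simpa [← pow_mul, (show Even 4 by decide).pow_abs] using
      (memLp_id_gaussianReal (μ := 0) (v := v) 4).integrable_norm_pow'

lemma variance_sq_gaussianReal (v : ℝ≥0) :
    Var[fun x => x ^ 2; gaussianReal 0 v] = 2 * v ^ 2 := by
  rw [variance_eq_sub (memLp_sq_gaussianReal v)]
  simp only [Pi.pow_apply, ← pow_mul, integral_sq_gaussianReal, integral_pow_four_gaussianReal]
  ring

section GaussianSquares

variable {Ω : Type*} [MeasurableSpace Ω] {P : Measure Ω} {v : ℝ≥0}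

namespace ProbabilityTheory.HasLaw

variable {X : Ω → ℝ} (hX : HasLaw X (gaussianReal 0 v) P)
include hX

lemma memLp_sq_of_gaussianReal : MemLp (fun ω => X ω ^ 2) 2 P :=
  (memLp_map_measure_iff (g := fun x => x ^ 2) (by fun_prop) hX.aemeasurable).1
    (hX.map_eq ▸ memLp_sq_gaussianReal v)

lemma integral_sq_of_gaussianReal : P[fun ω => X ω ^ 2] = (v : ℝ) :=
  (hX.integral_comp (f := fun x => x ^ 2) (by fun_prop)).trans (integral_sq_gaussianReal v)

lemma variance_sq_of_gaussianReal : Var[fun ω => X ω ^ 2; P] = 2 * v ^ 2 := by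
  rw [← variance_sq_gaussianReal v, ← hX.map_eq, variance_map (by fun_prop) hX.aemeasurable]
  rfl

end ProbabilityTheory.HasLaw

variable {ι : Type*} [Fintype ι] {X : ι → Ω → ℝ} (hX : ∀ i, HasLaw (X i) (gaussianReal 0 v) P)
include hX

lemma memLp_sum_sq_of_gaussianReal : MemLp (fun ω => ∑ i, X i ω ^ 2) 2 P :=
  memLp_finsetSum _ fun i _ => (hX i).memLp_sq_of_gaussianReal

lemma integral_sum_sq_of_gaussianReal :
    P[fun ω => ∑ i, X i ω ^ 2] = Fintype.card ι * (v : ℝ) := by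
  rw [integral_finsetSum _ fun i _ =>
    haveI := (hX i).isProbabilityMeasure
    (hX i).memLp_sq_of_gaussianReal.integrable one_le_two]
  simp [(hX _).integral_sq_of_gaussianReal]

lemma variance_sum_sq_of_gaussianReal (hind : iIndepFun X P) :
    Var[fun ω => ∑ i, X i ω ^ 2; P] = Fintype.card ι * (2 * v ^ 2) := by
  have := IndepFun.variance_sum (s := Finset.univ) (X := fun i ω => X i ω ^ 2)
    (fun i _ => (hX i).memLp_sq_of_gaussianReal)
    (fun i _ j _ hij => (hind.comp (fun _ x => x ^ 2) fun _ => by fun_prop).indepFun hij)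
  simp only [Finset.sum_fn] at this
  simp [this, (hX _).variance_sq_of_gaussianReal]

end GaussianSquares

/-- If `ε` is an `n`-dimensional Gaussian vector with i.i.d. centered coordinates of
variance `σ² > 0`, then `E[(‖ε‖² − 2nσ²)₊] ≤ 3σ²`. -/
theorem stmt_0 {Ω : Type*} [MeasureSpace Ω] [IsProbabilityMeasure (ℙ : Measure Ω)]
    {n : ℕ} (hn : 1 ≤ n) (σ : ℝ) (hσ : 0 < σ)
    (ε : Ω → EuclideanSpace ℝ (Fin n))
    (hmeas : ∀ i, Measurable fun ω => ε ω i)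
    (hlaw : ∀ i, Measure.map (fun ω => ε ω i) ℙ = gaussianReal 0 ⟨σ ^ 2, sq_nonneg σ⟩)
    (hindep : iIndepFun (fun i ω => ε ω i) ℙ) :
    ∫ ω, max (‖ε ω‖ ^ 2 - 2 * n * σ ^ 2) 0 ∂ℙ ≤ 3 * σ ^ 2 := by
  have hε : ∀ i, HasLaw (fun ω => ε ω i) (gaussianReal 0 ⟨σ ^ 2, sq_nonneg σ⟩) ℙ :=
    fun i => ⟨(hmeas i).aemeasurable, hlaw i⟩
  set S : Ω → ℝ := fun ω => ∑ i, ε ω i ^ 2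
  have hmean : ℙ[S] = n * σ ^ 2 :=
    (integral_sum_sq_of_gaussianReal hε).trans (by rw [Fintype.card_fin]; rfl)
  have hvar : Var[S; ℙ] = n * (2 * (σ ^ 2) ^ 2) :=
    (variance_sum_sq_of_gaussianReal hε hindep).trans (by rw [Fintype.card_fin]; rfl)
  have hpos : 0 < ℙ[S] := by
    rw [hmean]
    have : (0 : ℝ) < n := by exact_mod_cast hn
    positivity
  calc ∫ ω, max (‖ε ω‖ ^ 2 - 2 * n * σ ^ 2) 0 = ∫ ω, max (S ω - 2 * ℙ[S]) 0 := by
        simp_rw [EuclideanSpace.real_norm_sq_eq, hmean, mul_assoc]; rfl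
    _ ≤ Var[S; ℙ] / (4 * ℙ[S]) :=
        integral_max_sub_two_mul_integral_le (memLp_sum_sq_of_gaussianReal hε) hpos
    _ = σ ^ 2 / 2 := by
        rw [hvar, hmean]
        field_simp
        ring
    _ ≤ 3 * σ ^ 2 := by linarith [sq_nonneg σ]
end

section
/- Let A be an n×n real matrix inducing a one-to-one map from rg(A*) to rg(A), with pseudo-inverse A⁺ : rg(A) → rg(A*). Let Π̄ : rg(A) → rg(A*) be the restriction of the orthogonal projection onto rg(A*). Let S be the span of the right-singular vectors of A⁺ − Π̄ associated to singular values strictly smaller than 1, and Π_S the orthogonal projection onto S. Then for every f ∈ ℝⁿ, ‖(I − Π_S)Af‖ ≤ ‖f − Af‖. -/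
open MeasureTheory Finset

/-!
Write `A f = ∑ cₖ vₖ`. The component of `f` orthogonal to `rg(A*)` lies in `ker A`, so
`A⁺ (A f) = Π f` with `Π` the orthogonal projection onto `rg(A*)`, and the singular value
decomposition gives `Π (f - A f) = ∑ sₖ cₖ wₖ`. Hence
`‖(I - Π_S) A f‖² = ∑_{sₖ ≥ 1} cₖ² ≤ ∑ sₖ² cₖ² = ‖Π (f - A f)‖² ≤ ‖f - A f‖²`.
-/

section

open Submodule
open scoped InnerProductSpace

namespace Orthonormal

variable {𝕜 E ι : Type*} [RCLike 𝕜] [NormedAddCommGroup E] [InnerProductSpace 𝕜 E] {v : ι → E}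

theorem norm_sum_smul_sq (hv : Orthonormal 𝕜 v) (c : ι → 𝕜) (s : Finset ι) :
    ‖∑ i ∈ s, c i • v i‖ ^ 2 = ∑ i ∈ s, ‖c i‖ ^ 2 := by
  simpa using hv.orthogonalFamily.norm_sum c s

variable [DecidableEq E]

theorem starProjection_span_image (hv : Orthonormal 𝕜 v) (s : Finset ι) (x : E) :
    (span 𝕜 (s.image v : Set E)).starProjection x = ∑ i ∈ s, ⟪v i, x⟫_𝕜 • v i := by
  rw [starProjection_apply, (OrthonormalBasis.span hv s).orthogonalProjectionOnto_apply_eq_sum]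
  simp only [Submodule.coe_sum, Submodule.coe_smul, OrthonormalBasis.span_apply]
  exact Finset.sum_coe_sort s fun i => ⟪v i, x⟫_𝕜 • v i

theorem sum_inner_smul_eq_of_mem_span [Fintype ι] (hv : Orthonormal 𝕜 v) {x : E}
    (hx : x ∈ span 𝕜 (Set.range v)) : ∑ i, ⟪v i, x⟫_𝕜 • v i = x := by
  rw [← hv.starProjection_span_image]
  exact starProjection_eq_self_iff.mpr (by simpa using hx)

theorem sub_starProjection_span_image [Fintype ι] [DecidableEq ι] (hv : Orthonormal 𝕜 v)
    (s : Finset ι) {x : E} (hx : x ∈ span 𝕜 (Set.range v)) :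
    x - (span 𝕜 (s.image v : Set E)).starProjection x = ∑ i ∈ sᶜ, ⟪v i, x⟫_𝕜 • v i := by
  rw [hv.starProjection_span_image]
  nth_rewrite 1 [← hv.sum_inner_smul_eq_of_mem_span hx]
  rw [← sum_compl_add_sum s, add_sub_cancel_right]

end Orthonormal

theorem LinearMap.apply_starProjection_range_adjoint {𝕜 E F : Type*} [RCLike 𝕜]
    [NormedAddCommGroup E] [InnerProductSpace 𝕜 E] [FiniteDimensional 𝕜 E]
    [NormedAddCommGroup F] [InnerProductSpace 𝕜 F] [FiniteDimensional 𝕜 F]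
    (A : E →ₗ[𝕜] F) (x : E) : A ((range (adjoint A)).starProjection x) = A x := by
  have h := (range (adjoint A)).sub_starProjection_mem_orthogonal x
  rw [orthogonal_range, adjoint_adjoint, mem_ker, map_sub, sub_eq_zero] at h
  exact h.symm

theorem Finset.sum_sq_le_sum_mul_sq {ι : Type*} [Fintype ι] {T : Finset ι} {s : ι → ℝ}
    (hT : ∀ k ∈ T, 1 ≤ s k) (c : ι → ℝ) : ∑ k ∈ T, c k ^ 2 ≤ ∑ k, (s k * c k) ^ 2 := by
  refine (sum_le_sum fun k hk => ?_).trans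
    (sum_le_sum_of_subset_of_nonneg (subset_univ T) fun k _ _ => sq_nonneg _)
  rw [mul_pow]
  exact le_mul_of_one_le_left (sq_nonneg _) (one_le_pow₀ (hT k hk))

end

theorem stmt_2_general {n m : ℕ}
    (A Aplus : EuclideanSpace ℝ (Fin n) →ₗ[ℝ] EuclideanSpace ℝ (Fin n))
    -- A⁺ inverts A between rg(A*) and rg(A)
    (hAplus_left : ∀ x ∈ LinearMap.range (LinearMap.adjoint A), Aplus (A x) = x)
    -- singular value decomposition of A⁺ − Π̄ on rg(A)
    (s : Fin m → ℝ)
    (v w : Fin m → EuclideanSpace ℝ (Fin n))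
    (hv : Orthonormal ℝ v) (hw : Orthonormal ℝ w)
    (hv_span : Submodule.span ℝ (Set.range v) = LinearMap.range A)
    (hSVD : ∀ y ∈ LinearMap.range A,
      Aplus y - (Submodule.orthogonalProjectionOnto (LinearMap.range (LinearMap.adjoint A)) y :
          EuclideanSpace ℝ (Fin n))
        = ∑ k, (s k * inner ℝ (v k) y) • w k)
    (S : Submodule ℝ (EuclideanSpace ℝ (Fin n)))
    (hS : S = Submodule.span ℝ (v '' {k | s k < 1}))
    (f : EuclideanSpace ℝ (Fin n)) :
    ‖A f - (Submodule.orthogonalProjectionOnto S (A f) : EuclideanSpace ℝ (Fin n))‖ ≤ ‖f - A f‖ := by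
  classical
  set K := LinearMap.range (LinearMap.adjoint A)
  set T : Finset (Fin m) := univ.filter fun k => s k < 1
  have hST : S = Submodule.span ℝ (T.image v : Set (EuclideanSpace ℝ (Fin n))) := by
    simp [hS, T]
  have hAf : A f ∈ Submodule.span ℝ (Set.range v) := hv_span ▸ LinearMap.mem_range_self A f
  have hAplus : Aplus (A f) = K.starProjection f := by
    rw [← A.apply_starProjection_range_adjoint f]
    exact hAplus_left _ (K.starProjection_apply_mem f)
  have hSVD_f : K.starProjection (f - A f) = ∑ k, (s k * inner ℝ (v k) (A f)) • w k := by
    rw [map_sub, ← hAplus]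
    exact hSVD _ (LinearMap.mem_range_self A f)
  have hTc : ∀ k ∈ Tᶜ, 1 ≤ s k := by simp [T]
  rw [← pow_le_pow_iff_left₀ (norm_nonneg _) (norm_nonneg _) two_ne_zero, hST,
    ← Submodule.starProjection_apply, hv.sub_starProjection_span_image T hAf]
  calc ‖∑ k ∈ Tᶜ, inner ℝ (v k) (A f) • v k‖ ^ 2
      = ∑ k ∈ Tᶜ, inner ℝ (v k) (A f) ^ 2 := by
        simp only [hv.norm_sum_smul_sq, Real.norm_eq_abs, sq_abs]
    _ ≤ ∑ k, (s k * inner ℝ (v k) (A f)) ^ 2 := sum_sq_le_sum_mul_sq hTc _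
    _ = ‖K.starProjection (f - A f)‖ ^ 2 := by
      simp only [hSVD_f, hw.norm_sum_smul_sq, Real.norm_eq_abs, sq_abs]
    _ ≤ ‖f - A f‖ ^ 2 := by gcongr; exact K.norm_starProjection_apply_le _

/-- Let `A` be a linear operator on `ℝⁿ`, `A⁺` its pseudo-inverse (inverse of the
bijection `rg(A*) → rg(A)` induced by `A`), and `Π̄` the orthogonal projection onto
`rg(A*)` restricted to `rg(A)`.  If `A⁺ − Π̄` has a singular value decomposition with
singular values `s k`, right-singular vectors `v k` (an orthonormal basis of `rg(A)`)
and left-singular vectors `w k` (orthonormal, in `rg(A*)`), and `S` is the span of the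
right-singular vectors with singular value `< 1`, then `‖(I − Π_S)Af‖ ≤ ‖f − Af‖`
for every `f`. -/
theorem stmt_2 {n m : ℕ}
    (A Aplus : EuclideanSpace ℝ (Fin n) →ₗ[ℝ] EuclideanSpace ℝ (Fin n))
    -- A⁺ maps into rg(A*)
    (hAplus_range : ∀ y, Aplus y ∈ LinearMap.range (LinearMap.adjoint A))
    -- A⁺ inverts A between rg(A*) and rg(A)
    (hAplus_left : ∀ x ∈ LinearMap.range (LinearMap.adjoint A), Aplus (A x) = x)
    (hAplus_right : ∀ y ∈ LinearMap.range A, A (Aplus y) = y)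
    -- singular value decomposition of A⁺ − Π̄ on rg(A)
    (s : Fin m → ℝ) (hs : ∀ k, 0 ≤ s k)
    (v w : Fin m → EuclideanSpace ℝ (Fin n))
    (hv : Orthonormal ℝ v) (hw : Orthonormal ℝ w)
    (hv_span : Submodule.span ℝ (Set.range v) = LinearMap.range A)
    (hw_range : ∀ k, w k ∈ LinearMap.range (LinearMap.adjoint A))
    (hSVD : ∀ y ∈ LinearMap.range A,
      Aplus y - (Submodule.orthogonalProjectionOnto (LinearMap.range (LinearMap.adjoint A)) y :
          EuclideanSpace ℝ (Fin n))
        = ∑ k, (s k * inner ℝ (v k) y) • w k)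
    (S : Submodule ℝ (EuclideanSpace ℝ (Fin n)))
    (hS : S = Submodule.span ℝ (v '' {k | s k < 1}))
    (f : EuclideanSpace ℝ (Fin n)) :
    ‖A f - (Submodule.orthogonalProjectionOnto S (A f) : EuclideanSpace ℝ (Fin n))‖ ≤ ‖f - A f‖ :=
  stmt_2_general A Aplus hAplus_left s v w hv hw hv_span hSVD S hS f
end

section
/- With the notation of the previous statement (A an n×n matrix, A⁺ the pseudo-inverse operator from rg(A) to rg(A*), Π̄ the projection-induced operator, and S the span of right-singular vectors of A⁺ − Π̄ with singular values < 1), one has dim(S) ≤ 4·Tr(A*A). -/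
/-!
On `S` only singular values `< 1` contribute, so `A⁺ − Π̄` is a contraction there and
`A⁺ = (A⁺ − Π̄) + Π̄` has norm at most `2`. Hence `‖x‖ ≤ 2‖A x‖` on `W = A⁺(S)`, and
`dim W ≥ dim S` because `A A⁺ = id` on `S`. Computing `Tr(A*A) = ∑ ‖A bᵢ‖²` in an orthonormal
basis extending one of `W` gives `Tr(A*A) ≥ dim W / 4`.
-/

open Module LinearMap
open scoped InnerProductSpace

variable {E : Type*} [NormedAddCommGroup E] [InnerProductSpace ℝ E]

theorem Orthonormal.inner_eq_zero_of_mem_span_image {ι : Type*} {v : ι → E}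
    (hv : Orthonormal ℝ v) {s : Set ι} {k : ι} (hk : k ∉ s) {y : E}
    (hy : y ∈ Submodule.span ℝ (v '' s)) : ⟪v k, y⟫_ℝ = 0 := by
  obtain ⟨l, hl, rfl⟩ := Finsupp.mem_span_image_iff_linearCombination ℝ |>.mp hy
  rw [real_inner_comm]
  exact hv.inner_finsupp_eq_zero hk hl

theorem Orthonormal.norm_sum_smul_le {ι : Type*} [Fintype ι] {v w : ι → E}
    (hv : Orthonormal ℝ v) (hw : Orthonormal ℝ w) {c : ι → ℝ} {y : E}
    (hc : ∀ k, |c k| ≤ |⟪v k, y⟫_ℝ|) : ‖∑ k, c k • w k‖ ≤ ‖y‖ := by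
  refine pow_le_pow_iff_left₀ (norm_nonneg _) (norm_nonneg _) two_ne_zero |>.mp ?_
  calc ‖∑ k, c k • w k‖ ^ 2 = ∑ k, c k ^ 2 := by
        rw [← real_inner_self_eq_norm_sq, hw.inner_sum]; simp [sq]
    _ ≤ ∑ k, ‖⟪v k, y⟫_ℝ‖ ^ 2 :=
        Finset.sum_le_sum fun k _ => by
          rw [Real.norm_eq_abs, ← sq_abs (c k)]; exact pow_le_pow_left₀ (abs_nonneg _) (hc k) 2
    _ ≤ ‖y‖ ^ 2 := hv.sum_inner_products_le y

theorem LinearMap.trace_adjoint_comp_self_eq_sum [FiniteDimensional ℝ E] {ι : Type*} [Fintype ι]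
    (T : E →ₗ[ℝ] E) (b : OrthonormalBasis ι ℝ E) :
    (adjoint T ∘ₗ T).trace ℝ E = ∑ i, ‖T (b i)‖ ^ 2 := by
  simp [trace_eq_sum_inner _ b, adjoint_inner_right]

theorem LinearMap.finrank_le_sq_mul_trace_adjoint_comp_self [FiniteDimensional ℝ E]
    (T : E →ₗ[ℝ] E) {W : Submodule ℝ E} {c : ℝ} (hW : ∀ x ∈ W, ‖x‖ ≤ c * ‖T x‖) :
    (finrank ℝ W : ℝ) ≤ c ^ 2 * (adjoint T ∘ₗ T).trace ℝ E := by
  set e : Fin (finrank ℝ W) → E := fun j => (stdOrthonormalBasis ℝ W j : E)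
  have he : Orthonormal ℝ e :=
    (stdOrthonormalBasis ℝ W).orthonormal.comp_linearIsometry W.subtypeₗᵢ
  obtain ⟨u, b, hsub, hb⟩ := he.toSubtypeRange.exists_orthonormalBasis_extension
  have hunit : ∀ j, 1 ≤ c ^ 2 * ‖T (e j)‖ ^ 2 := fun j => by
    have := hW (e j) (stdOrthonormalBasis ℝ W j).2
    rw [he.norm_eq_one] at this
    nlinarith [norm_nonneg (T (e j))]
  calc (finrank ℝ W : ℝ) = ∑ _j : Fin (finrank ℝ W), (1 : ℝ) := by simp
    _ ≤ ∑ j, c ^ 2 * ‖T (e j)‖ ^ 2 := Finset.sum_le_sum fun j _ => hunit j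
    _ = c ^ 2 * ∑ x ∈ Finset.univ.map ⟨e, he.linearIndependent.injective⟩, ‖T x‖ ^ 2 := by
        rw [Finset.sum_map, Finset.mul_sum]; rfl
    _ ≤ c ^ 2 * ∑ x ∈ u, ‖T x‖ ^ 2 := by
        refine mul_le_mul_of_nonneg_left (Finset.sum_le_sum_of_subset_of_nonneg ?_
          fun _ _ _ => sq_nonneg _) (sq_nonneg c)
        rintro _ hx
        obtain ⟨j, -, rfl⟩ := Finset.mem_map.mp hx
        exact hsub (Set.mem_range_self j)
    _ = c ^ 2 * (adjoint T ∘ₗ T).trace ℝ E := by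
        rw [T.trace_adjoint_comp_self_eq_sum b, hb, Finset.sum_coe_sort u (fun x => ‖T x‖ ^ 2)]

theorem stmt_3_general {n m : ℕ}
    (A Aplus : EuclideanSpace ℝ (Fin n) →ₗ[ℝ] EuclideanSpace ℝ (Fin n))
    -- A⁺ inverts A between rg(A*) and rg(A)
    (hAplus_right : ∀ y ∈ LinearMap.range A, A (Aplus y) = y)
    -- singular value decomposition of A⁺ − Π̄ on rg(A)
    (s : Fin m → ℝ) (hs : ∀ k, 0 ≤ s k)
    (v w : Fin m → EuclideanSpace ℝ (Fin n))
    (hv : Orthonormal ℝ v) (hw : Orthonormal ℝ w)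
    (hv_span : Submodule.span ℝ (Set.range v) = LinearMap.range A)
    (hSVD : ∀ y ∈ LinearMap.range A,
      Aplus y - (Submodule.orthogonalProjection (LinearMap.range (LinearMap.adjoint A)) y :
          EuclideanSpace ℝ (Fin n))
        = ∑ k, (s k * inner ℝ (v k) y) • w k)
    (S : Submodule ℝ (EuclideanSpace ℝ (Fin n)))
    (hS : S = Submodule.span ℝ (v '' {k | s k < 1})) :
    (Module.finrank ℝ S : ℝ)
      ≤ 4 * LinearMap.trace ℝ (EuclideanSpace ℝ (Fin n)) (LinearMap.adjoint A ∘ₗ A) := by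
  have hS_le : S ≤ LinearMap.range A :=
    hS ▸ hv_span ▸ Submodule.span_mono (Set.image_subset_range v _)
  have hAplus_le : ∀ y ∈ S, ‖Aplus y‖ ≤ 2 * ‖y‖ := by
    intro y hy
    have hcoef : ∀ k, |s k * ⟪v k, y⟫_ℝ| ≤ |⟪v k, y⟫_ℝ| := fun k => by
      rcases lt_or_ge (s k) 1 with hk | hk
      · rw [abs_mul, abs_of_nonneg (hs k)]
        exact mul_le_of_le_one_left (abs_nonneg _) hk.le
      · rw [hv.inner_eq_zero_of_mem_span_image (s := {k | s k < 1}) (not_lt.mpr hk) (hS ▸ hy)]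
        simp
    rw [← sub_add_cancel (Aplus y), hSVD y (hS_le hy), two_mul]
    exact norm_add_le_of_le (hv.norm_sum_smul_le hw hcoef)
      (Submodule.norm_orthogonalProjectionOnto_apply_le _ y)
  have hW : ∀ x ∈ S.map Aplus, ‖x‖ ≤ 2 * ‖A x‖ := by
    rintro _ ⟨y, hy, rfl⟩
    rw [hAplus_right y (hS_le hy)]
    exact hAplus_le y hy
  have hS_map : S ≤ (S.map Aplus).map A := fun y hy =>
    ⟨Aplus y, Submodule.mem_map_of_mem hy, hAplus_right y (hS_le hy)⟩
  calc (finrank ℝ S : ℝ) ≤ finrank ℝ (S.map Aplus) := by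
        exact_mod_cast (Submodule.finrank_mono hS_map).trans (Submodule.finrank_map_le A _)
    _ ≤ 2 ^ 2 * (adjoint A ∘ₗ A).trace ℝ _ := A.finrank_le_sq_mul_trace_adjoint_comp_self hW
    _ = _ := by norm_num

/-- Let `A` be a linear operator on `ℝⁿ`, `A⁺` its pseudo-inverse (inverse of the
bijection `rg(A*) → rg(A)` induced by `A`), and `Π̄` the orthogonal projection onto
`rg(A*)` restricted to `rg(A)`.  If `A⁺ − Π̄` has a singular value decomposition with
singular values `s k`, right-singular vectors `v k` (an orthonormal basis of `rg(A)`)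
and left-singular vectors `w k` (orthonormal, in `rg(A*)`), and `S` is the span of the
right-singular vectors with singular value `< 1`, then `dim(S) ≤ 4·Tr(A*A)`. -/
theorem stmt_3 {n m : ℕ}
    (A Aplus : EuclideanSpace ℝ (Fin n) →ₗ[ℝ] EuclideanSpace ℝ (Fin n))
    -- A⁺ maps into rg(A*)
    (hAplus_range : ∀ y, Aplus y ∈ LinearMap.range (LinearMap.adjoint A))
    -- A⁺ inverts A between rg(A*) and rg(A)
    (hAplus_left : ∀ x ∈ LinearMap.range (LinearMap.adjoint A), Aplus (A x) = x)
    (hAplus_right : ∀ y ∈ LinearMap.range A, A (Aplus y) = y)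
    -- singular value decomposition of A⁺ − Π̄ on rg(A)
    (s : Fin m → ℝ) (hs : ∀ k, 0 ≤ s k)
    (v w : Fin m → EuclideanSpace ℝ (Fin n))
    (hv : Orthonormal ℝ v) (hw : Orthonormal ℝ w)
    (hv_span : Submodule.span ℝ (Set.range v) = LinearMap.range A)
    (hw_range : ∀ k, w k ∈ LinearMap.range (LinearMap.adjoint A))
    (hSVD : ∀ y ∈ LinearMap.range A,
      Aplus y - (Submodule.orthogonalProjection (LinearMap.range (LinearMap.adjoint A)) y :
          EuclideanSpace ℝ (Fin n))
        = ∑ k, (s k * inner ℝ (v k) y) • w k)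
    (S : Submodule ℝ (EuclideanSpace ℝ (Fin n)))
    (hS : S = Submodule.span ℝ (v '' {k | s k < 1})) :
    (Module.finrank ℝ S : ℝ)
      ≤ 4 * LinearMap.trace ℝ (EuclideanSpace ℝ (Fin n)) (LinearMap.adjoint A ∘ₗ A) :=
  stmt_3_general A Aplus hAplus_right s hs v w hv hw hv_span hSVD S hS
end

section
/- (Makovoz-type approximation) For every g in the convex hull of φ₁,…,φ_M ∈ ℝⁿ and every integer D ≥ 1, there exists a subset m ⊆ {1,…,M} with |m| = min(2D, M) such that ‖g − Π_{S_m} g‖² ≤ (4/D)·max_{1≤j≤M} ‖φⱼ‖², where S_m is the linear span of {φⱼ : j ∈ m} and Π_{S_m} is the orthogonal projection onto S_m. -/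
/-!
Maurey's empirical approximation, in Jones' greedy form. Write `B = 4 max ‖φⱼ‖²`, which bounds
`‖g - φⱼ‖²` because `g` is a convex combination of the `φⱼ`. Starting from any `v₁ = φⱼ`, set
`v_{k+1} = (k v_k + φⱼ) / (k + 1)` with `j` chosen so that `⟪g - v_k, g - φⱼ⟫ ≤ 0`; such a `j`
exists since the linear functional `⟪g - v_k, ·⟫` attains its maximum over the hull at a vertex.
The cross term then drops out and `‖g - v_k‖² ≤ B / k` by induction. After `D` steps `v_D` lies in
the span of at most `D` of the `φⱼ`, and enlarging this index set to `min (2D, M)` elements and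
projecting orthogonally only decreases the error.
-/

open RealInnerProductSpace

section Greedy

variable {E : Type*} [NormedAddCommGroup E] [InnerProductSpace ℝ E]

lemma exists_inner_le_of_mem_convexHull {s : Set E} {g : E} (hg : g ∈ convexHull ℝ s) (a : E) :
    ∃ x ∈ s, ⟪a, g⟫ ≤ ⟪a, x⟫ :=
  ((innerₗ E a).convexOn convex_univ).exists_ge_of_mem_convexHull (Set.subset_univ s) hg

lemma norm_sub_sq_le_of_mem_convexHull {s : Set E} {g x : E} {C : ℝ}
    (hg : g ∈ convexHull ℝ s) (hs : ∀ y ∈ s, ‖y‖ ^ 2 ≤ C) (hx : x ∈ s) :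
    ‖g - x‖ ^ 2 ≤ 4 * C := by
  obtain ⟨y, hy, hgy⟩ := convexHull_exists_dist_ge hg x
  rw [dist_eq_norm, dist_eq_norm] at hgy
  calc ‖g - x‖ ^ 2 ≤ (‖y‖ + ‖x‖) ^ 2 := by gcongr; exact hgy.trans (norm_sub_le y x)
    _ ≤ 2 * ‖y‖ ^ 2 + 2 * ‖x‖ ^ 2 := by nlinarith [sq_nonneg (‖y‖ - ‖x‖)]
    _ ≤ 4 * C := by linarith [hs x hx, hs y hy]

lemma norm_sq_average_le_of_inner_nonpos {a b : E} {k B : ℝ} (hk : 0 < k) (hab : ⟪a, b⟫ ≤ 0)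
    (ha : ‖a‖ ^ 2 ≤ B / k) (hb : ‖b‖ ^ 2 ≤ B) :
    ‖(k / (k + 1)) • a + (1 / (k + 1)) • b‖ ^ 2 ≤ B / (k + 1) := by
  have hk₁ : 0 < k + 1 := by linarith
  have hka : k * ‖a‖ ^ 2 ≤ B := by rwa [le_div_iff₀' hk] at ha
  rw [norm_add_sq_real, norm_smul, norm_smul, real_inner_smul_left, real_inner_smul_right,
    Real.norm_of_nonneg (by positivity), Real.norm_of_nonneg (by positivity), le_div_iff₀ hk₁]
  field_simp
  nlinarith [mul_le_mul_of_nonneg_left hka hk.le, mul_nonpos_of_nonneg_of_nonpos hk.le hab]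

theorem exists_finset_norm_sub_sq_le_of_mem_convexHull {ι : Type*} {φ : ι → E} {g : E} {B : ℝ}
    (hg : g ∈ convexHull ℝ (Set.range φ)) (hB : ∀ i, ‖g - φ i‖ ^ 2 ≤ B) {k : ℕ} (hk : 1 ≤ k) :
    ∃ T : Finset ι, T.card ≤ k ∧ ∃ v ∈ convexHull ℝ (φ '' T), ‖g - v‖ ^ 2 ≤ B / k := by
  classical
  induction k, hk using Nat.le_induction with
  | base =>
    obtain ⟨_, i, rfl⟩ := convexHull_nonempty_iff.mp ⟨g, hg⟩
    exact ⟨{i}, by simp, φ i, subset_convexHull ℝ _ ⟨i, by simp⟩, by simpa using hB i⟩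
  | succ k hk ih =>
    obtain ⟨T, hT, v, hv, hgv⟩ := ih
    obtain ⟨_, ⟨i, rfl⟩, hi⟩ := exists_inner_le_of_mem_convexHull hg (g - v)
    have hk₀ : (0 : ℝ) < k := by exact_mod_cast hk
    have hsum : (k : ℝ) / (k + 1) + 1 / (k + 1) = 1 := by field_simp
    refine ⟨insert i T, (Finset.card_insert_le i T).trans (by omega),
      (k / (k + 1) : ℝ) • v + (1 / (k + 1) : ℝ) • φ i, ?_, ?_⟩
    · refine convex_convexHull ℝ _ (convexHull_mono (Set.image_mono ?_) hv)
        (subset_convexHull ℝ _ ⟨i, by simp⟩) (by positivity) (by positivity) hsum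
      simp
    · have hdecomp : g - ((k / (k + 1) : ℝ) • v + (1 / (k + 1) : ℝ) • φ i) =
          (k / (k + 1) : ℝ) • (g - v) + (1 / (k + 1) : ℝ) • (g - φ i) := by
        rw [smul_sub, smul_sub, sub_add_sub_comm, ← add_smul, hsum, one_smul]
      rw [hdecomp, Nat.cast_succ]
      refine norm_sq_average_le_of_inner_nonpos hk₀ ?_ hgv (hB i)
      rw [inner_sub_right]
      linarith

lemma norm_sub_starProjection_le {K : Submodule ℝ E} [K.HasOrthogonalProjection] (g : E)
    {v : E} (hv : v ∈ K) : ‖g - K.starProjection g‖ ≤ ‖g - v‖ := by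
  rw [Submodule.starProjection_minimal]
  exact ciInf_le ⟨0, Set.forall_mem_range.mpr fun _ => norm_nonneg _⟩ (⟨v, hv⟩ : K)

end Greedy

/-- (Makovoz-type approximation) For every `g` in the convex hull of `φ₁,…,φ_M ∈ ℝⁿ` and
every integer `D ≥ 1`, there is a subset `m ⊆ {1,…,M}` with `|m| = min(2D, M)` such that
`‖g − Π_{S_m} g‖² ≤ (4/D)·max_j ‖φⱼ‖²`, where `S_m = span{φⱼ : j ∈ m}`. -/
theorem stmt_13 {n M : ℕ} (φ : Fin M → EuclideanSpace ℝ (Fin n))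
    (g : EuclideanSpace ℝ (Fin n)) (hg : g ∈ convexHull ℝ (Set.range φ))
    (D : ℕ) (hD : 1 ≤ D) :
    ∃ m : Finset (Fin M), m.card = min (2 * D) M ∧
      ‖g - (Submodule.orthogonalProjection (Submodule.span ℝ (φ '' ↑m)) g :
          EuclideanSpace ℝ (Fin n))‖ ^ 2
        ≤ 4 / (D : ℝ) * ⨆ j, ‖φ j‖ ^ 2 := by
  set C := ⨆ j, ‖φ j‖ ^ 2
  have hC : ∀ x ∈ Set.range φ, ‖x‖ ^ 2 ≤ C := by
    rintro _ ⟨j, rfl⟩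
    exact le_ciSup (Set.finite_range fun j => ‖φ j‖ ^ 2).bddAbove j
  obtain ⟨T, hT, v, hv, hgv⟩ := exists_finset_norm_sub_sq_le_of_mem_convexHull hg
    (fun i => norm_sub_sq_le_of_mem_convexHull hg hC ⟨i, rfl⟩) hD
  obtain ⟨m, hTm, -, hm⟩ := Finset.exists_subsuperset_card_eq (Finset.subset_univ T)
    (show T.card ≤ min (2 * D) M from le_min (by omega) (by simpa using T.card_le_univ)) (by simp)
  refine ⟨m, hm, ?_⟩
  have hvm : v ∈ Submodule.span ℝ (φ '' ↑m) :=
    Submodule.span_mono (Set.image_mono hTm) (convexHull_min Submodule.subset_span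
      (Submodule.convex _) hv)
  calc _ ≤ ‖g - v‖ ^ 2 := by gcongr; exact norm_sub_starProjection_le g hvm
    _ ≤ 4 * C / D := hgv
    _ = 4 / D * C := by ring
end
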